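/- arXiv:2508.16902 — 2 statements merged into one kernel-verified Lean document; each statement's English description precedes it below -/
import Mathlib

section
/- Let (Ω,𝔉,P) be a probability space, 𝔊₁,…,𝔊_J sub-σ-algebras of 𝔉, φ a square-integrable real random variable, and π₀, π₁,…,π_J > 0. For tuples f = (f₁,…,f_J) with each f_k square-integrable, 𝔊_k-measurable, and E[f_k] = 0, define Q(f) = π₀^{-1} E[(φ − Σ_{j=1}^J f_j)²] + Σ_{k=1}^J π_k^{-1} E[f_k²]. Then f* = (f₁*,…,f_J*) minimizes Q over all such tuples if and only if for every k = 1,…,J, E[ φ − Σ_{j=1}^J γ_{j,k} f_j* | 𝔊_k ] = E[φ] almost surely, where γ_{j,k} = 1 + 1{j=k} (π₀/π_k). -/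
/-!
Write `ψₖ(f) = φ - ∑ⱼ γⱼₖ fⱼ` and let `Q₀` be `Q` with `φ` replaced by `0`, a nonnegative
quadratic form. Since `π₀⁻¹ (π₀ / πₖ) = πₖ⁻¹`, expanding the squares gives
`Q(f + h) = Q(f) - 2π₀⁻¹ ∑ₖ E[ψₖ(f) hₖ] + Q₀(h)`.
The admissible tuples form a vector space, so `f*` minimizes `Q` over it iff the linear term
vanishes in every admissible direction (the direction `t • hₖ` in one coordinate gives a
nonnegative quadratic in `t` with no constant term), i.e. iff `E[ψₖ(f*) h] = 0` for every
centered, square-integrable, `𝔊ₖ`-measurable `h`. Testing against the centered indicators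
`1ₛ - P(s)`, `s ∈ 𝔊ₖ`, this says exactly that `E[ψₖ(f*) | 𝔊ₖ]` is the constant `E[ψₖ(f*)] = E[φ]`.
-/

open MeasureTheory

namespace OptimalTransfer

variable {Ω : Type*} {m m0 : MeasurableSpace Ω} {μ : Measure Ω}

variable (m μ) in
def centeredL2 [IsFiniteMeasure μ] : Submodule ℝ (Ω → ℝ) where
  carrier := {h | MemLp h 2 μ ∧ StronglyMeasurable[m] h ∧ ∫ ω, h ω ∂μ = 0}
  zero_mem' := ⟨MemLp.zero, stronglyMeasurable_zero, integral_zero _ _⟩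
  add_mem' := fun ⟨hf, hfm, hf0⟩ ⟨hg, hgm, hg0⟩ =>
    ⟨hf.add hg, hfm.add hgm, by
      rw [integral_add' (hf.integrable one_le_two) (hg.integrable one_le_two), hf0, hg0,
        add_zero]⟩
  smul_mem' := fun c _ ⟨hf, hfm, hf0⟩ =>
    ⟨hf.const_smul c, hfm.const_smul c, by simp [integral_const_mul, hf0]⟩

theorem integral_mul_eq_zero_of_condExp_ae_eq_const [IsFiniteMeasure μ]
    (hm : m ≤ m0) {ψ h : Ω → ℝ} {c : ℝ} (hψ : MemLp ψ 2 μ)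
    (hce : μ[ψ|m] =ᵐ[μ] fun _ => c) (hh : h ∈ centeredL2 m μ) :
    ∫ ω, ψ ω * h ω ∂μ = 0 := by
  obtain ⟨hh2, hhm, hh0⟩ := hh
  have hpull := condExp_mul_of_stronglyMeasurable_left hhm (hh2.integrable_mul hψ)
    (hψ.integrable one_le_two)
  calc ∫ ω, ψ ω * h ω ∂μ = ∫ ω, (μ[h * ψ|m]) ω ∂μ := by
        simp_rw [integral_condExp hm, Pi.mul_apply, mul_comm]
    _ = ∫ ω, h ω * c ∂μ := integral_congr_ae <| by
        filter_upwards [hpull, hce] with ω hp hc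
        rw [hp, Pi.mul_apply, hc]
    _ = 0 := by rw [integral_mul_const, hh0, zero_mul]

theorem condExp_ae_eq_const_of_forall_integral_mul_eq_zero [IsProbabilityMeasure μ]
    (hm : m ≤ m0) {ψ : Ω → ℝ} {c : ℝ} (hψ : MemLp ψ 2 μ)
    (hc : ∫ ω, ψ ω ∂μ = c) (horth : ∀ h ∈ centeredL2 m μ, ∫ ω, ψ ω * h ω ∂μ = 0) :
    μ[ψ|m] =ᵐ[μ] fun _ => c := by
  have hψ1 := hψ.integrable one_le_two
  refine (ae_eq_condExp_of_forall_setIntegral_eq hm hψ1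
    (fun s _ _ => (integrable_const c).integrableOn) (fun s hs _ => ?_)
    stronglyMeasurable_const.aestronglyMeasurable).symm
  have hs0 : MeasurableSet s := hm s hs
  have hind : s.indicator 1 - (fun _ => μ.real s) ∈ centeredL2 m μ := by
    refine ⟨(memLp_indicator_const 2 hs0 1 (Or.inr (measure_ne_top μ s))).sub (memLp_const _),
      (stronglyMeasurable_const.indicator hs).sub stronglyMeasurable_const, ?_⟩
    rw [integral_sub' ((integrable_const 1).indicator hs0) (integrable_const _)]
    simp [integral_indicator hs0]
  have hpair : ∫ ω, ψ ω * (s.indicator 1 - fun _ => μ.real s : Ω → ℝ) ω ∂μ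
      = ∫ ω in s, ψ ω ∂μ - μ.real s * c := by
    rw [← integral_indicator hs0, ← hc, ← integral_const_mul,
      ← integral_sub (hψ1.indicator hs0) (hψ1.const_mul _)]
    refine integral_congr_ae (Filter.Eventually.of_forall fun ω => ?_)
    by_cases hω : ω ∈ s <;> simp [hω, mul_sub, mul_comm]
  calc ∫ ω in s, c ∂μ = μ.real s * c := by rw [setIntegral_const, smul_eq_mul]
    _ = ∫ ω in s, ψ ω ∂μ := by linarith [horth _ hind]

theorem condExp_ae_eq_const_iff [IsProbabilityMeasure μ]
    (hm : m ≤ m0) {ψ : Ω → ℝ} {c : ℝ} (hψ : MemLp ψ 2 μ)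
    (hc : ∫ ω, ψ ω ∂μ = c) :
    μ[ψ|m] =ᵐ[μ] (fun _ => c) ↔ ∀ h ∈ centeredL2 m μ, ∫ ω, ψ ω * h ω ∂μ = 0 :=
  ⟨fun hce _ hh => integral_mul_eq_zero_of_condExp_ae_eq_const hm hψ hce hh,
    condExp_ae_eq_const_of_forall_integral_mul_eq_zero hm hψ hc⟩

theorem eq_zero_of_forall_le_add_mul_add_sq_mul {a b c : ℝ}
    (h : ∀ t : ℝ, a ≤ a + t * b + t ^ 2 * c) : b = 0 := by
  have hd := discrim_le_zero (a := c) (b := b) (c := 0) fun t => by nlinarith [h t]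
  rw [discrim] at hd
  nlinarith [sq_nonneg b]

variable {ι : Type*} [Fintype ι]

noncomputable def transferLoss (π₀ : ℝ) (π : ι → ℝ) (x : ℝ) (a : ι → ℝ) : ℝ :=
  π₀⁻¹ * (x - ∑ j, a j) ^ 2 + ∑ k, (π k)⁻¹ * a k ^ 2

theorem transferLoss_add {π₀ : ℝ} {π : ι → ℝ} (hπ₀ : π₀ ≠ 0) (x : ℝ) (a b : ι → ℝ) :
    transferLoss π₀ π x (a + b) = transferLoss π₀ π x a
      - 2 * π₀⁻¹ * ∑ k, (x - ∑ j, a j - π₀ / π k * a k) * b k + transferLoss π₀ π 0 b := by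
  have hcross : ∑ k, (x - ∑ j, a j - π₀ / π k * a k) * b k
      = (x - ∑ j, a j) * ∑ k, b k - ∑ k, π₀ / π k * a k * b k := by
    simp only [sub_mul, Finset.sum_sub_distrib, Finset.mul_sum]
  have hweights : π₀⁻¹ * ∑ k, π₀ / π k * a k * b k = ∑ k, (π k)⁻¹ * (a k * b k) := by
    rw [Finset.mul_sum]
    exact Finset.sum_congr rfl fun k _ => by field_simp
  have hsq : ∑ k, (π k)⁻¹ * (a k + b k) ^ 2
      = ∑ k, (π k)⁻¹ * a k ^ 2 + 2 * ∑ k, (π k)⁻¹ * (a k * b k) + ∑ k, (π k)⁻¹ * b k ^ 2 := by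
    rw [Finset.mul_sum, ← Finset.sum_add_distrib, ← Finset.sum_add_distrib]
    exact Finset.sum_congr rfl fun k _ => by ring
  simp only [transferLoss, Pi.add_apply, Finset.sum_add_distrib, hsq, hcross]
  linear_combination (-2) * hweights

noncomputable def transferRisk (μ : Measure Ω) (φ : Ω → ℝ) (π₀ : ℝ) (π : ι → ℝ)
    (f : ι → Ω → ℝ) : ℝ :=
  π₀⁻¹ * ∫ ω, (φ ω - ∑ j, f j ω) ^ 2 ∂μ + ∑ k, (π k)⁻¹ * ∫ ω, (f k ω) ^ 2 ∂μ

noncomputable def transferResidual [DecidableEq ι] (φ : Ω → ℝ) (π₀ : ℝ) (π : ι → ℝ)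
    (f : ι → Ω → ℝ) (k : ι) : Ω → ℝ :=
  fun ω => φ ω - ∑ j, (1 + if j = k then π₀ / π k else 0) * f j ω

section Risk

variable {φ : Ω → ℝ} {π₀ : ℝ} {π : ι → ℝ} {f h : ι → Ω → ℝ}

theorem transferResidual_apply [DecidableEq ι] (k : ι) (ω : Ω) :
    transferResidual φ π₀ π f k ω = φ ω - ∑ j, f j ω - π₀ / π k * f k ω := by
  simp [transferResidual, add_mul, Finset.sum_add_distrib, ite_mul, sub_sub]

theorem memLp_transferResidual [DecidableEq ι] (hφ : MemLp φ 2 μ) (hf : ∀ j, MemLp (f j) 2 μ)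
    (k : ι) : MemLp (transferResidual φ π₀ π f k) 2 μ :=
  hφ.sub (memLp_finsetSum _ fun j _ => (hf j).const_mul _)

theorem integral_transferResidual [DecidableEq ι] [IsFiniteMeasure μ]
    {G : ι → MeasurableSpace Ω} (hφ : Integrable φ μ) (hf : ∀ j, f j ∈ centeredL2 (G j) μ)
    (k : ι) :
    ∫ ω, transferResidual φ π₀ π f k ω ∂μ = ∫ ω, φ ω ∂μ := by
  have hf1 : ∀ j, Integrable (fun ω => (1 + if j = k then π₀ / π k else 0) * f j ω) μ :=
    fun j => ((hf j).1.integrable one_le_two).const_mul _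
  unfold transferResidual
  rw [integral_sub hφ (integrable_finsetSum _ fun j _ => hf1 j),
    integral_finsetSum _ fun j _ => hf1 j]
  simp [integral_const_mul, fun j => (hf j).2.2]

theorem transferRisk_nonneg (hπ₀ : 0 ≤ π₀) (hπ : ∀ k, 0 ≤ π k) :
    0 ≤ transferRisk μ φ π₀ π f :=
  add_nonneg (mul_nonneg (inv_nonneg.2 hπ₀) (integral_nonneg fun _ => sq_nonneg _))
    (Finset.sum_nonneg fun k _ =>
      mul_nonneg (inv_nonneg.2 (hπ k)) (integral_nonneg fun _ => sq_nonneg _))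

theorem transferRisk_zero_smul (t : ℝ) :
    transferRisk μ 0 π₀ π (t • h) = t ^ 2 * transferRisk μ 0 π₀ π h := by
  simp only [transferRisk, Pi.zero_apply, Pi.smul_apply, smul_eq_mul, ← Finset.mul_sum, mul_pow,
    zero_sub, neg_sq, integral_const_mul, mul_add, mul_left_comm _ (t ^ 2)]

theorem integrable_transferLoss (hφ : MemLp φ 2 μ) (hf : ∀ j, MemLp (f j) 2 μ) :
    Integrable (fun ω => transferLoss π₀ π (φ ω) fun j => f j ω) μ :=
  ((hφ.sub (memLp_finsetSum _ fun j _ => hf j)).integrable_sq.const_mul _).add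
    (integrable_finsetSum _ fun k _ => (hf k).integrable_sq.const_mul _)

theorem transferRisk_eq_integral (hφ : MemLp φ 2 μ) (hf : ∀ j, MemLp (f j) 2 μ) :
    transferRisk μ φ π₀ π f = ∫ ω, transferLoss π₀ π (φ ω) (fun j => f j ω) ∂μ := by
  have hsq : ∀ k, Integrable (fun ω => (π k)⁻¹ * f k ω ^ 2) μ :=
    fun k => (hf k).integrable_sq.const_mul _
  have hres : Integrable (fun ω => π₀⁻¹ * (φ ω - ∑ j, f j ω) ^ 2) μ :=
    (hφ.sub (memLp_finsetSum _ fun j _ => hf j)).integrable_sq.const_mul _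
  simp only [transferRisk, transferLoss]
  rw [integral_add hres (integrable_finsetSum _ fun k _ => hsq k), integral_const_mul,
    integral_finsetSum _ fun k _ => hsq k]
  simp only [integral_const_mul]

theorem transferRisk_add [DecidableEq ι] (hπ₀ : π₀ ≠ 0) (hφ : MemLp φ 2 μ)
    (hf : ∀ j, MemLp (f j) 2 μ) (hh : ∀ j, MemLp (h j) 2 μ) :
    transferRisk μ φ π₀ π (f + h) = transferRisk μ φ π₀ π f
      - 2 * π₀⁻¹ * ∑ k, ∫ ω, transferResidual φ π₀ π f k ω * h k ω ∂μ
      + transferRisk μ 0 π₀ π h := by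
  have hcross : ∀ k, Integrable (fun ω => transferResidual φ π₀ π f k ω * h k ω) μ :=
    fun k => (memLp_transferResidual hφ hf k).integrable_mul (hh k)
  have hcross_sum : Integrable
      (fun ω => 2 * π₀⁻¹ * ∑ k, transferResidual φ π₀ π f k ω * h k ω) μ :=
    (integrable_finsetSum _ fun k _ => hcross k).const_mul _
  have hdiff : Integrable (fun ω => transferLoss π₀ π (φ ω) (fun j => f j ω)
      - 2 * π₀⁻¹ * ∑ k, transferResidual φ π₀ π f k ω * h k ω) μ :=
    (integrable_transferLoss hφ hf).sub hcross_sum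
  have hpoint : ∀ ω, transferLoss π₀ π (φ ω) (fun j => (f + h) j ω)
      = transferLoss π₀ π (φ ω) (fun j => f j ω)
        - 2 * π₀⁻¹ * ∑ k, transferResidual φ π₀ π f k ω * h k ω
        + transferLoss π₀ π ((0 : Ω → ℝ) ω) (fun j => h j ω) := fun ω => by
    simp only [transferResidual_apply]
    exact transferLoss_add hπ₀ _ _ _
  rw [transferRisk_eq_integral (f := f + h) hφ fun j => (hf j).add (hh j),
    transferRisk_eq_integral hφ hf, transferRisk_eq_integral MemLp.zero hh,
    integral_congr_ae (ae_of_all _ hpoint),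
    integral_add hdiff (integrable_transferLoss MemLp.zero hh),
    integral_sub (integrable_transferLoss hφ hf) hcross_sum,
    integral_const_mul, integral_finsetSum _ fun k _ => hcross k]

end Risk

section FirstOrder

variable [DecidableEq ι] [IsFiniteMeasure μ] {G : ι → MeasurableSpace Ω} {φ : Ω → ℝ} {π₀ : ℝ}
  {π : ι → ℝ} {f : ι → Ω → ℝ}

theorem integral_transferResidual_mul_eq_zero_of_isMinOn (hπ₀ : π₀ ≠ 0) (hφ : MemLp φ 2 μ)
    (hf : ∀ j, f j ∈ centeredL2 (G j) μ)
    (hmin : IsMinOn (transferRisk μ φ π₀ π) {g | ∀ j, g j ∈ centeredL2 (G j) μ} f)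
    (k : ι) {h : Ω → ℝ} (hh : h ∈ centeredL2 (G k) μ) :
    ∫ ω, transferResidual φ π₀ π f k ω * h ω ∂μ = 0 := by
  set e : ι → Ω → ℝ := Pi.single k h
  have he : ∀ j, e j ∈ centeredL2 (G j) μ := fun j => by
    rcases eq_or_ne j k with rfl | hjk
    · simpa [e] using hh
    · simp [e, Pi.single_eq_of_ne hjk, zero_mem]
  have hcross : ∑ j, ∫ ω, transferResidual φ π₀ π f j ω * e j ω ∂μ
      = ∫ ω, transferResidual φ π₀ π f k ω * h ω ∂μ := by
    rw [Fintype.sum_eq_single k fun j hjk => by simp [e, Pi.single_eq_of_ne hjk]]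
    simp [e]
  have hte : ∀ t : ℝ, ∀ j, (t • e) j ∈ centeredL2 (G j) μ :=
    fun t j => Submodule.smul_mem _ t (he j)
  have hb := eq_zero_of_forall_le_add_mul_add_sq_mul
    (a := transferRisk μ φ π₀ π f) (b := -2 * π₀⁻¹ * ∫ ω, transferResidual φ π₀ π f k ω * h ω ∂μ)
    (c := transferRisk μ 0 π₀ π e) fun t => by
      have hle := isMinOn_iff.mp hmin (f + t • e) fun j => add_mem (hf j) (hte t j)
      rw [transferRisk_add (h := t • e) hπ₀ hφ (fun j => (hf j).1) (fun j => (hte t j).1),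
        transferRisk_zero_smul] at hle
      have hscale : ∑ j, ∫ ω, transferResidual φ π₀ π f j ω * (t • e) j ω ∂μ
          = t * ∫ ω, transferResidual φ π₀ π f k ω * h ω ∂μ := by
        simp only [← hcross, Finset.mul_sum, ← integral_const_mul, Pi.smul_apply, smul_eq_mul,
          mul_left_comm t]
      rw [hscale] at hle
      linarith
  simpa [hπ₀] using hb

theorem isMinOn_transferRisk_of_forall_integral_transferResidual_mul_eq_zero (hπ₀ : 0 < π₀)
    (hπ : ∀ k, 0 ≤ π k) (hφ : MemLp φ 2 μ) (hf : ∀ j, f j ∈ centeredL2 (G j) μ)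
    (horth : ∀ k, ∀ h ∈ centeredL2 (G k) μ, ∫ ω, transferResidual φ π₀ π f k ω * h ω ∂μ = 0) :
    IsMinOn (transferRisk μ φ π₀ π) {g | ∀ j, g j ∈ centeredL2 (G j) μ} f := by
  refine isMinOn_iff.mpr fun g hg => ?_
  have hgf : ∀ j, (g - f) j ∈ centeredL2 (G j) μ := fun j => sub_mem (hg j) (hf j)
  calc transferRisk μ φ π₀ π f ≤ transferRisk μ φ π₀ π f + transferRisk μ 0 π₀ π (g - f) :=
        le_add_of_nonneg_right (transferRisk_nonneg hπ₀.le hπ)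
    _ = transferRisk μ φ π₀ π (f + (g - f)) := by
        rw [transferRisk_add (h := g - f) hπ₀.ne' hφ (fun j => (hf j).1) (fun j => (hgf j).1),
          Finset.sum_eq_zero fun k _ => horth k _ (hgf k), mul_zero, sub_zero]
    _ = transferRisk μ φ π₀ π g := by rw [add_sub_cancel]

theorem isMinOn_transferRisk_iff (hπ₀ : 0 < π₀) (hπ : ∀ k, 0 ≤ π k) (hφ : MemLp φ 2 μ)
    (hf : ∀ j, f j ∈ centeredL2 (G j) μ) :
    IsMinOn (transferRisk μ φ π₀ π) {g | ∀ j, g j ∈ centeredL2 (G j) μ} f ↔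
      ∀ k, ∀ h ∈ centeredL2 (G k) μ, ∫ ω, transferResidual φ π₀ π f k ω * h ω ∂μ = 0 :=
  ⟨fun hmin k _ hh => integral_transferResidual_mul_eq_zero_of_isMinOn hπ₀.ne' hφ hf hmin k hh,
    isMinOn_transferRisk_of_forall_integral_transferResidual_mul_eq_zero hπ₀ hπ hφ hf⟩

end FirstOrder

end OptimalTransfer

open OptimalTransfer in
/-- On a probability space with sub-σ-algebras `𝔊₁,…,𝔊_J`, for
square-integrable `φ` and weights `π₀, π₁,…,π_J > 0`, a tuple `f* = (f₁*,…,f_J*)` of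
square-integrable, `𝔊_k`-measurable, mean-zero variables minimizes
`Q(f) = π₀⁻¹E[(φ - Σⱼ fⱼ)²] + Σₖ πₖ⁻¹E[fₖ²]` over all such tuples if and only if for
every `k`, `E[φ - Σⱼ γ_{j,k} fⱼ* | 𝔊_k] = E[φ]` a.s., where `γ_{j,k} = 1 + 1{j=k}(π₀/πₖ)`. -/
theorem optimal_transfer_function_first_order_conditions
    {Ω : Type*} [m0 : MeasurableSpace Ω] (μ : Measure Ω) [IsProbabilityMeasure μ]
    {J : ℕ} (G : Fin J → MeasurableSpace Ω) (hG : ∀ k, G k ≤ m0)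
    (φ : Ω → ℝ) (hφ : MemLp φ 2 μ)
    (π₀ : ℝ) (π : Fin J → ℝ) (hπ₀ : 0 < π₀) (hπ : ∀ k, 0 < π k)
    (fstar : Fin J → Ω → ℝ)
    (hstar : ∀ k, MemLp (fstar k) 2 μ ∧ StronglyMeasurable[G k] (fstar k) ∧
      ∫ ω, fstar k ω ∂μ = 0) :
    ((∀ g : Fin J → Ω → ℝ,
        (∀ k, MemLp (g k) 2 μ ∧ StronglyMeasurable[G k] (g k) ∧ ∫ ω, g k ω ∂μ = 0) →
        π₀⁻¹ * ∫ ω, (φ ω - ∑ j, fstar j ω) ^ 2 ∂μ +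
            ∑ k, (π k)⁻¹ * ∫ ω, (fstar k ω) ^ 2 ∂μ ≤
          π₀⁻¹ * ∫ ω, (φ ω - ∑ j, g j ω) ^ 2 ∂μ +
            ∑ k, (π k)⁻¹ * ∫ ω, (g k ω) ^ 2 ∂μ) ↔
      (∀ k, μ[fun ω => φ ω - ∑ j, (1 + if j = k then π₀ / π k else 0) * fstar j ω | G k]
          =ᵐ[μ] fun _ => ∫ ω, φ ω ∂μ)) := by
  have hf : ∀ j, fstar j ∈ centeredL2 (G j) μ := hstar
  refine isMinOn_iff.symm.trans <|
    (isMinOn_transferRisk_iff hπ₀ (fun k => (hπ k).le) hφ hf).trans <| forall_congr' fun k => ?_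
  exact (condExp_ae_eq_const_iff (hG k) (memLp_transferResidual hφ (fun j => (hf j).1) k)
    (integral_transferResidual (hφ.integrable one_le_two) hf k)).symm
end

section
/- Let (Ω,𝔉,P) be a probability space carrying a square-integrable real random variable φ and random elements X₁,…,X_J with values in measurable spaces S₁,…,S_J that are pairwise independent, together with an independent copy (φ', X₁',…,X_J') of the tuple (φ, X₁,…,X_J) (same joint distribution, independent of it). For k = 1,…,J let H_k: S_k × S_k → ℝ be bounded measurable, let f_k: S_k → ℝ be bounded measurable with E[f_k(X_k)] = 0, and let γ_{j,k} be reals with γ_{j,k} = 1 whenever j ≠ k. Then for every k, E[(φ − Σ_{j=1}^J γ_{j,k} f_j(X_j)) H_k(X_k, X_k') (φ' − Σ_{j=1}^J γ_{j,k} f_j(X_j'))] = E[(φ − γ_{k,k} f_k(X_k)) H_k(X_k, X_k') (φ' − γ_{k,k} f_k(X_k'))]. Consequently the risk R(f₁,…,f_J) = Σ_k of the left-hand terms decomposes as a sum of terms each depending only on the single function f_k. -/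
/-!
Transport everything to the law `ν` of `W = (φ, X₁, …, X_J)`: since the copy `W'` is independent
of `W` and has the same law, `(W, W')` has law `ν ⊗ ν`. Off the diagonal the weights are `1`, so
the `k`-th integrand is `(a - s)(w) · H_k(w_k, w'_k) · (a - s)(w')` with
`a = φ - γ_{k,k} f_k(X_k)` and `s = Σ_{j ≠ k} f_j(X_j)`. For a fixed value `c` of the other
argument, `∫ s(w) H_k(w_k, c) dν(w) = Σ_{j ≠ k} E[f_j(X_j)] E[H_k(X_k, c)] = 0` by pairwise
independence, so by Fubini every cross term involving `s` vanishes.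
-/

open MeasureTheory ProbabilityTheory

lemma sum_mul_eq_mul_add_sum_erase {ι R : Type*} [Fintype ι] [DecidableEq ι] [Semiring R]
    {w g : ι → R} {k : ι} (hw : ∀ j, j ≠ k → w j = 1) :
    ∑ j, w j * g j = w k * g k + ∑ j ∈ Finset.univ.erase k, g j := by
  rw [← Finset.add_sum_erase _ _ (Finset.mem_univ k)]
  congr 1
  exact Finset.sum_congr rfl fun j hj => by rw [hw j (Finset.ne_of_mem_erase hj), one_mul]

lemma integrable_comp_of_abs_le {α β : Type*} [MeasurableSpace α] [MeasurableSpace β]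
    {μ : Measure α} [IsFiniteMeasure μ] {g : β → ℝ} (hg : Measurable g)
    (hgC : ∃ C, ∀ x, |g x| ≤ C) {Y : α → β} (hY : Measurable Y) :
    Integrable (fun x => g (Y x)) μ := by
  obtain ⟨C, hC⟩ := hgC
  exact .of_bound (hg.comp hY).aestronglyMeasurable C
    (.of_forall fun x => (Real.norm_eq_abs _).trans_le (hC _))

section ProdKernel

variable {α β : Type*} [MeasurableSpace α] [MeasurableSpace β] {ν : Measure α} {ν' : Measure β}
  {K : α × β → ℝ} {C : ℝ}

lemma integrable_prod_mul_mul {u : α → ℝ} {v : β → ℝ} (hu : Integrable u ν)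
    (hv : Integrable v ν') (hK : AEStronglyMeasurable K (ν.prod ν')) (hKC : ∀ z, ‖K z‖ ≤ C) :
    Integrable (fun z => u z.1 * K z * v z.2) (ν.prod ν') :=
  ((hu.mul_prod hv).bdd_mul hK (.of_forall hKC)).congr (.of_forall fun z => by ring)

variable [SFinite ν] [SFinite ν']

lemma integral_prod_mul_mul_eq_zero_of_left {u : α → ℝ} {v : β → ℝ} (hu : Integrable u ν)
    (hv : Integrable v ν') (hK : AEStronglyMeasurable K (ν.prod ν')) (hKC : ∀ z, ‖K z‖ ≤ C)
    (hu0 : ∀ y, ∫ x, u x * K (x, y) ∂ν = 0) :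
    ∫ z, u z.1 * K z * v z.2 ∂(ν.prod ν') = 0 := by
  rw [integral_prod_symm _ (integrable_prod_mul_mul hu hv hK hKC)]
  simp only [integral_mul_const, hu0, zero_mul, integral_zero]

lemma integral_prod_mul_mul_eq_zero_of_right {u : α → ℝ} {v : β → ℝ} (hu : Integrable u ν)
    (hv : Integrable v ν') (hK : AEStronglyMeasurable K (ν.prod ν')) (hKC : ∀ z, ‖K z‖ ≤ C)
    (hv0 : ∀ x, ∫ y, K (x, y) * v y ∂ν' = 0) :
    ∫ z, u z.1 * K z * v z.2 ∂(ν.prod ν') = 0 := by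
  rw [integral_prod _ (integrable_prod_mul_mul hu hv hK hKC)]
  simp only [mul_assoc, integral_const_mul, hv0, mul_zero, integral_zero]

lemma integral_prod_sub_mul_mul_sub {a s : α → ℝ} {a' s' : β → ℝ} (ha : Integrable a ν)
    (hs : Integrable s ν) (ha' : Integrable a' ν') (hs' : Integrable s' ν')
    (hK : AEStronglyMeasurable K (ν.prod ν')) (hKC : ∀ z, ‖K z‖ ≤ C)
    (hs0 : ∀ y, ∫ x, s x * K (x, y) ∂ν = 0) (hs0' : ∀ x, ∫ y, K (x, y) * s' y ∂ν' = 0) :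
    ∫ z, (a z.1 - s z.1) * K z * (a' z.2 - s' z.2) ∂(ν.prod ν') =
      ∫ z, a z.1 * K z * a' z.2 ∂(ν.prod ν') := by
  have hv := ha'.sub hs'
  calc _ = ∫ z, a z.1 * K z * (a' - s') z.2 - s z.1 * K z * (a' - s') z.2 ∂(ν.prod ν') := by
        congr 1 with z; simp only [Pi.sub_apply]; ring
    _ = ∫ z, a z.1 * K z * (a' - s') z.2 ∂(ν.prod ν') := by
        rw [integral_sub (integrable_prod_mul_mul ha hv hK hKC)
          (integrable_prod_mul_mul hs hv hK hKC),
          integral_prod_mul_mul_eq_zero_of_left hs hv hK hKC hs0, sub_zero]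
    _ = ∫ z, a z.1 * K z * a' z.2 - a z.1 * K z * s' z.2 ∂(ν.prod ν') := by
        congr 1 with z; simp only [Pi.sub_apply]; ring
    _ = _ := by
        rw [integral_sub (integrable_prod_mul_mul ha ha' hK hKC)
          (integrable_prod_mul_mul ha hs' hK hKC),
          integral_prod_mul_mul_eq_zero_of_right ha hs' hK hKC hs0', sub_zero]

end ProdKernel

lemma integral_sum_mul_eq_zero_of_indepFun {Ω ι : Type*} [MeasurableSpace Ω] {μ : Measure Ω}
    {s : Finset ι} {g : ι → Ω → ℝ} {h : Ω → ℝ} {C : ℝ} (hg : ∀ j ∈ s, Integrable (g j) μ)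
    (hh : AEStronglyMeasurable h μ) (hhC : ∀ ω, ‖h ω‖ ≤ C)
    (hind : ∀ j ∈ s, IndepFun (g j) h μ) (hg0 : ∀ j ∈ s, ∫ ω, g j ω ∂μ = 0) :
    ∫ ω, (∑ j ∈ s, g j ω) * h ω ∂μ = 0 := by
  simp_rw [Finset.sum_mul]
  rw [integral_finsetSum s fun j hj => (hg j hj).mul_bdd hh (.of_forall hhC)]
  refine Finset.sum_eq_zero fun j hj => ?_
  exact ((hind j hj).integral_mul_eq_mul_integral (hg j hj).1 hh).trans
    (by rw [hg0 j hj, zero_mul])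

lemma integral_prod_map_eq_integral_of_indepFun {Ω β E : Type*} [MeasurableSpace Ω]
    [MeasurableSpace β] [NormedAddCommGroup E] [NormedSpace ℝ E] {μ : Measure Ω}
    [IsFiniteMeasure μ] {W W' : Ω → β} (hW : AEMeasurable W μ) (hW' : AEMeasurable W' μ)
    (hind : IndepFun W W' μ) (hcopy : μ.map W' = μ.map W) {F : β × β → E}
    (hF : AEStronglyMeasurable F ((μ.map W).prod (μ.map W))) :
    ∫ z, F z ∂((μ.map W).prod (μ.map W)) = ∫ ω, F (W ω, W' ω) ∂μ := by
  have hlaw : μ.map (fun ω => (W ω, W' ω)) = (μ.map W).prod (μ.map W) := by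
    rw [hind.map_prod_eq_prod_map_map hW hW', hcopy]
  rw [← hlaw] at hF ⊢
  exact integral_map (hW.prodMk hW') hF

lemma kernel_risk_term_eq_of_indepFun {Ω : Type*} [MeasurableSpace Ω] {μ : Measure Ω}
    [IsProbabilityMeasure μ] {J : ℕ} {S : Fin J → Type*} [∀ k, MeasurableSpace (S k)]
    {φ φ' : Ω → ℝ} {X X' : ∀ k, Ω → S k} (hφ : Integrable φ μ) (hφmeas : Measurable φ)
    (hφ'meas : Measurable φ') (hXmeas : ∀ k, Measurable (X k))
    (hX'meas : ∀ k, Measurable (X' k)) (hpairwise : ∀ j k, j ≠ k → IndepFun (X j) (X k) μ)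
    (hcopy : Measure.map (fun ω => (φ' ω, fun k => X' k ω)) μ =
      Measure.map (fun ω => (φ ω, fun k => X k ω)) μ)
    (hcopy_indep : IndepFun (fun ω => (φ ω, fun k => X k ω))
      (fun ω => (φ' ω, fun k => X' k ω)) μ)
    {f : ∀ k, S k → ℝ} (hfmeas : ∀ k, Measurable (f k))
    (hfbdd : ∀ k, ∃ C : ℝ, ∀ x, |f k x| ≤ C) (hf0 : ∀ k, ∫ ω, f k (X k ω) ∂μ = 0)
    {k : Fin J} {w : Fin J → ℝ} (hw : ∀ j, j ≠ k → w j = 1)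
    {H : S k × S k → ℝ} (hHmeas : Measurable H) (hHbdd : ∃ C : ℝ, ∀ x, |H x| ≤ C) :
    ∫ ω, (φ ω - ∑ j, w j * f j (X j ω)) * H (X k ω, X' k ω) *
        (φ' ω - ∑ j, w j * f j (X' j ω)) ∂μ =
      ∫ ω, (φ ω - w k * f k (X k ω)) * H (X k ω, X' k ω) *
        (φ' ω - w k * f k (X' k ω)) ∂μ := by
  obtain ⟨C, hC⟩ := hHbdd
  set W : Ω → ℝ × (∀ j, S j) := fun ω => (φ ω, fun j => X j ω)
  set W' : Ω → ℝ × (∀ j, S j) := fun ω => (φ' ω, fun j => X' j ω)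
  have hW : Measurable W := hφmeas.prodMk (measurable_pi_lambda _ hXmeas)
  have hW' : Measurable W' := hφ'meas.prodMk (measurable_pi_lambda _ hX'meas)
  set ν := μ.map W
  have hcoord : ∀ j, Measurable fun p : ℝ × (∀ j, S j) => p.2 j :=
    fun j => (measurable_pi_apply j).comp measurable_snd
  set a : ℝ × (∀ j, S j) → ℝ := fun p => p.1 - w k * f k (p.2 k)
  set s : ℝ × (∀ j, S j) → ℝ := fun p => ∑ j ∈ Finset.univ.erase k, f j (p.2 j)
  set K : (ℝ × (∀ j, S j)) × (ℝ × (∀ j, S j)) → ℝ := fun z => H (z.1.2 k, z.2.2 k)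
  have ha : Integrable a ν :=
    ((integrable_map_measure measurable_fst.aestronglyMeasurable hW.aemeasurable).2 hφ).sub
      ((integrable_comp_of_abs_le (hfmeas k) (hfbdd k) (hcoord k)).const_mul _)
  have hs : Integrable s ν :=
    integrable_finsetSum _ fun j _ => integrable_comp_of_abs_le (hfmeas j) (hfbdd j) (hcoord j)
  have hK : Measurable K := by fun_prop
  have hHC : ∀ x, ‖H x‖ ≤ C := fun x => (Real.norm_eq_abs _).trans_le (hC x)
  have hKC : ∀ z, ‖K z‖ ≤ C := fun z => hHC _
  have hs0 : ∀ h : S k → ℝ, Measurable h → (∀ t, ‖h t‖ ≤ C) →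
      ∫ p, s p * h (p.2 k) ∂ν = 0 := by
    intro h hh hhC
    rw [integral_map (f := fun p => s p * h (p.2 k)) hW.aemeasurable
      (hs.1.mul (hh.comp (hcoord k)).aestronglyMeasurable)]
    exact integral_sum_mul_eq_zero_of_indepFun
      (fun j _ => integrable_comp_of_abs_le (hfmeas j) (hfbdd j) (hXmeas j))
      (hh.comp (hXmeas k)).aestronglyMeasurable (fun ω => hhC _)
      (fun j hj => (hpairwise j k (Finset.ne_of_mem_erase hj)).comp (hfmeas j) hh)
      (fun j _ => hf0 j)
  have hFm : Measurable fun z : (ℝ × (∀ j, S j)) × (ℝ × (∀ j, S j)) =>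
      (a z.1 - s z.1) * K z * (a z.2 - s z.2) := by fun_prop
  calc _ = ∫ ω, (a (W ω) - s (W ω)) * K (W ω, W' ω) * (a (W' ω) - s (W' ω)) ∂μ := by
        simp only [a, s, K, W, W', sum_mul_eq_mul_add_sum_erase hw]
        congr 1 with ω; ring
    _ = ∫ z, (a z.1 - s z.1) * K z * (a z.2 - s z.2) ∂(ν.prod ν) := by
        rw [integral_prod_map_eq_integral_of_indepFun hW.aemeasurable hW'.aemeasurable
          hcopy_indep hcopy hFm.aestronglyMeasurable]
    _ = ∫ z, a z.1 * K z * a z.2 ∂(ν.prod ν) :=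
        integral_prod_sub_mul_mul_sub ha hs ha hs hK.aestronglyMeasurable hKC
          (fun y => hs0 (fun t => H (t, y.2 k)) (by fun_prop) fun t => hHC _)
          (fun x => by
            simpa only [mul_comm] using hs0 (fun t => H (x.2 k, t)) (by fun_prop) fun t => hHC _)
    _ = _ := integral_prod_map_eq_integral_of_indepFun hW.aemeasurable hW'.aemeasurable
        hcopy_indep hcopy (by fun_prop)

theorem kernel_risk_separable_for_independent_blocks_general
    {Ω : Type*} [MeasurableSpace Ω] (μ : Measure Ω) [IsProbabilityMeasure μ]
    {J : ℕ} (S : Fin J → Type*) [∀ k, MeasurableSpace (S k)]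
    (φ : Ω → ℝ) (hφ : MemLp φ 2 μ) (hφmeas : Measurable φ)
    (X : ∀ k, Ω → S k) (hXmeas : ∀ k, Measurable (X k))
    (hpairwise : ∀ j k, j ≠ k → IndepFun (X j) (X k) μ)
    (φ' : Ω → ℝ) (hφ'meas : Measurable φ')
    (X' : ∀ k, Ω → S k) (hX'meas : ∀ k, Measurable (X' k))
    -- (φ', X₁',…,X_J') is a copy of (φ, X₁,…,X_J): same joint distribution …
    (hcopy : Measure.map (fun ω => (φ' ω, fun k => X' k ω)) μ =
      Measure.map (fun ω => (φ ω, fun k => X k ω)) μ)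
    -- … independent of the original tuple
    (hcopy_indep : IndepFun (fun ω => (φ ω, fun k => X k ω))
      (fun ω => (φ' ω, fun k => X' k ω)) μ)
    (Hker : ∀ k, S k × S k → ℝ)
    (hHmeas : ∀ k, Measurable (Hker k))
    (hHbdd : ∀ k, ∃ C : ℝ, ∀ x, |Hker k x| ≤ C)
    (f : ∀ k, S k → ℝ)
    (hfmeas : ∀ k, Measurable (f k))
    (hfbdd : ∀ k, ∃ C : ℝ, ∀ x, |f k x| ≤ C)
    (hf0 : ∀ k, ∫ ω, f k (X k ω) ∂μ = 0)
    (γ : Fin J → Fin J → ℝ) (hγ : ∀ j k, j ≠ k → γ j k = 1) :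
    (∀ k, ∫ ω, (φ ω - ∑ j, γ j k * f j (X j ω)) * Hker k (X k ω, X' k ω) *
          (φ' ω - ∑ j, γ j k * f j (X' j ω)) ∂μ =
        ∫ ω, (φ ω - γ k k * f k (X k ω)) * Hker k (X k ω, X' k ω) *
          (φ' ω - γ k k * f k (X' k ω)) ∂μ) ∧
    (∑ k, ∫ ω, (φ ω - ∑ j, γ j k * f j (X j ω)) * Hker k (X k ω, X' k ω) *
          (φ' ω - ∑ j, γ j k * f j (X' j ω)) ∂μ =
      ∑ k, ∫ ω, (φ ω - γ k k * f k (X k ω)) * Hker k (X k ω, X' k ω) *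
          (φ' ω - γ k k * f k (X' k ω)) ∂μ) := by
  have key := fun k => kernel_risk_term_eq_of_indepFun (hφ.integrable one_le_two) hφmeas
    hφ'meas hXmeas hX'meas hpairwise hcopy hcopy_indep hfmeas hfbdd hf0
    (fun j hj => hγ j k hj) (hHmeas k) (hHbdd k)
  exact ⟨key, Finset.sum_congr rfl fun k _ => key k⟩

/-- **separability of the kernel risk for pairwise independent blocks.**
With pairwise independent blocks `X₁,…,X_J`, an independent copy `(φ', X')` of `(φ, X)`,
bounded measurable kernels `H_k`, bounded measurable mean-zero `f_k`, and weights
`γ_{j,k} = 1` for `j ≠ k`, each summand of the kernel risk depends only on `f_k`: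
`E[(φ - Σⱼ γ_{j,k} fⱼ(Xⱼ)) H_k(X_k, X_k') (φ' - Σⱼ γ_{j,k} fⱼ(Xⱼ'))]
  = E[(φ - γ_{k,k} f_k(X_k)) H_k(X_k, X_k') (φ' - γ_{k,k} f_k(X_k'))]`,
and hence the total risk decomposes as a sum of terms each involving a single `f_k`. -/
theorem kernel_risk_separable_for_independent_blocks
    {Ω : Type*} [MeasurableSpace Ω] (μ : Measure Ω) [IsProbabilityMeasure μ]
    {J : ℕ} (S : Fin J → Type*) [∀ k, MeasurableSpace (S k)]
    (φ : Ω → ℝ) (hφ : MemLp φ 2 μ) (hφmeas : Measurable φ)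
    (X : ∀ k, Ω → S k) (hXmeas : ∀ k, Measurable (X k))
    (hpairwise : ∀ j k, j ≠ k → IndepFun (X j) (X k) μ)
    (φ' : Ω → ℝ) (hφ' : MemLp φ' 2 μ) (hφ'meas : Measurable φ')
    (X' : ∀ k, Ω → S k) (hX'meas : ∀ k, Measurable (X' k))
    -- (φ', X₁',…,X_J') is a copy of (φ, X₁,…,X_J): same joint distribution …
    (hcopy : Measure.map (fun ω => (φ' ω, fun k => X' k ω)) μ =
      Measure.map (fun ω => (φ ω, fun k => X k ω)) μ)
    -- … independent of the original tuple
    (hcopy_indep : IndepFun (fun ω => (φ ω, fun k => X k ω))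
      (fun ω => (φ' ω, fun k => X' k ω)) μ)
    (Hker : ∀ k, S k × S k → ℝ)
    (hHmeas : ∀ k, Measurable (Hker k))
    (hHbdd : ∀ k, ∃ C : ℝ, ∀ x, |Hker k x| ≤ C)
    (f : ∀ k, S k → ℝ)
    (hfmeas : ∀ k, Measurable (f k))
    (hfbdd : ∀ k, ∃ C : ℝ, ∀ x, |f k x| ≤ C)
    (hf0 : ∀ k, ∫ ω, f k (X k ω) ∂μ = 0)
    (γ : Fin J → Fin J → ℝ) (hγ : ∀ j k, j ≠ k → γ j k = 1) :
    (∀ k, ∫ ω, (φ ω - ∑ j, γ j k * f j (X j ω)) * Hker k (X k ω, X' k ω) *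
          (φ' ω - ∑ j, γ j k * f j (X' j ω)) ∂μ =
        ∫ ω, (φ ω - γ k k * f k (X k ω)) * Hker k (X k ω, X' k ω) *
          (φ' ω - γ k k * f k (X' k ω)) ∂μ) ∧
    (∑ k, ∫ ω, (φ ω - ∑ j, γ j k * f j (X j ω)) * Hker k (X k ω, X' k ω) *
          (φ' ω - ∑ j, γ j k * f j (X' j ω)) ∂μ =
      ∑ k, ∫ ω, (φ ω - γ k k * f k (X k ω)) * Hker k (X k ω, X' k ω) *
          (φ' ω - γ k k * f k (X' k ω)) ∂μ) :=
  kernel_risk_separable_for_independent_blocks_general μ S φ hφ hφmeas X hXmeas hpairwise φ' hφ'meas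
    X' hX'meas hcopy hcopy_indep Hker hHmeas hHbdd f hfmeas hfbdd hf0 γ hγ
end
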